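/- arXiv:1503.05776 — 3 statements merged into one kernel-verified Lean document; each statement's English description precedes it below -/
import Mathlib

section
/- Let K be an algebraically closed field of characteristic 0 and let s(x,y) = c_4 x^4 + c_3 x^3 y + c_2 x^2 y^2 + c_1 x y^3 + c_0 y^4 be a binary quartic form over K. Then s is the square of a binary quadratic form if and only if the point (c_0, c_1, c_2, c_3, c_4) satisfies the seven cubic equations: 8X_1X_4^2 − 4X_2X_3X_4 + X_3^3 = 0, 16X_0X_4^2 + 2X_1X_3X_4 − 4X_2^2X_4 + X_2X_3^2 = 0, 8X_0X_3X_4 − 4X_1X_2X_4 + X_1X_3^2 = 0, X_0X_3^2 − X_1^2X_4 = 0, 8X_0X_1X_4 − 4X_0X_2X_3 + X_1^2X_3 = 0, 16X_0^2X_4 + 2X_0X_1X_3 − 4X_0X_2^2 + X_1^2X_2 = 0, and 8X_0^2X_3 − 4X_0X_1X_2 + X_1^3 = 0. -/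
/-!
Setting `y = 1` turns `s = q²` into an identity of univariate polynomials, so `q(x, 1)` has degree
at most 2, and comparing coefficients shows `(c₀, …, c₄) = (d², 2bd, b² + 2ad, 2ab, a²)`; such
points satisfy the seven cubics identically. Conversely, if `c₄ ≠ 0` take `a = √c₄` and solve the
`c₃`, `c₂` equations for `b`, `d`: the first two cubics then give the `c₁`, `c₀` equations. If
`c₄ = 0` the cubics force `c₃ = 0` and the same argument runs with `c₂`, and then with `c₀`.
-/

open MvPolynomial

section BinaryForms

variable {K : Type*}

noncomputable def binaryQuartic [CommSemiring K] (c : Fin 5 → K) : MvPolynomial (Fin 2) K :=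
  C (c 4) * X 0 ^ 4 + C (c 3) * X 0 ^ 3 * X 1 + C (c 2) * X 0 ^ 2 * X 1 ^ 2 +
    C (c 1) * X 0 * X 1 ^ 3 + C (c 0) * X 1 ^ 4

noncomputable def binaryQuadratic [CommSemiring K] (a b d : K) : MvPolynomial (Fin 2) K :=
  C a * X 0 ^ 2 + C b * X 0 * X 1 + C d * X 1 ^ 2

def sqCoeffs [CommSemiring K] (a b d : K) : Fin 5 → K :=
  ![d ^ 2, 2 * b * d, b ^ 2 + 2 * a * d, 2 * a * b, a ^ 2]

def SatisfiesCubics [CommRing K] (c : Fin 5 → K) : Prop :=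
  8 * c 1 * c 4 ^ 2 - 4 * c 2 * c 3 * c 4 + c 3 ^ 3 = 0 ∧
  16 * c 0 * c 4 ^ 2 + 2 * c 1 * c 3 * c 4 - 4 * c 2 ^ 2 * c 4 + c 2 * c 3 ^ 2 = 0 ∧
  8 * c 0 * c 3 * c 4 - 4 * c 1 * c 2 * c 4 + c 1 * c 3 ^ 2 = 0 ∧
  c 0 * c 3 ^ 2 - c 1 ^ 2 * c 4 = 0 ∧
  8 * c 0 * c 1 * c 4 - 4 * c 0 * c 2 * c 3 + c 1 ^ 2 * c 3 = 0 ∧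
  16 * c 0 ^ 2 * c 4 + 2 * c 0 * c 1 * c 3 - 4 * c 0 * c 2 ^ 2 + c 1 ^ 2 * c 2 = 0 ∧
  8 * c 0 ^ 2 * c 3 - 4 * c 0 * c 1 * c 2 + c 1 ^ 3 = 0

noncomputable abbrev dehomogenize [CommSemiring K] :
    MvPolynomial (Fin 2) K →ₐ[K] Polynomial K :=
  aeval ![Polynomial.X, 1]

theorem isHomogeneous_binaryQuadratic [CommSemiring K] (a b d : K) :
    (binaryQuadratic a b d).IsHomogeneous 2 :=
  (((isHomogeneous_C_mul_X_pow a 0 2).add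
    (((isHomogeneous_C _ _).mul (isHomogeneous_X _ _)).mul (isHomogeneous_X _ _)))).add
    (isHomogeneous_C_mul_X_pow d 1 2)

theorem binaryQuadratic_sq [CommSemiring K] (a b d : K) :
    binaryQuadratic a b d ^ 2 = binaryQuartic (sqCoeffs a b d) := by
  simp only [binaryQuadratic, binaryQuartic, sqCoeffs, Matrix.cons_val, map_add, map_mul, map_pow,
    map_ofNat]
  ring

theorem satisfiesCubics_sqCoeffs [CommRing K] (a b d : K) : SatisfiesCubics (sqCoeffs a b d) := by
  simp only [SatisfiesCubics, sqCoeffs, Matrix.cons_val]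
  refine ⟨?_, ?_, ?_, ?_, ?_, ?_, ?_⟩ <;> ring

theorem Polynomial.eq_quadratic_of_natDegree_le_two [Semiring K] {p : Polynomial K}
    (hp : p.natDegree ≤ 2) :
    p = .C (p.coeff 2) * .X ^ 2 + .C (p.coeff 1) * .X + .C (p.coeff 0) := by
  conv_lhs => rw [p.as_sum_range' 3 (by omega)]
  simp only [Finset.sum_range_succ, Finset.sum_range_zero, ← Polynomial.C_mul_X_pow_eq_monomial,
    pow_zero, pow_one, mul_one, zero_add]
  abel

theorem dehomogenize_binaryQuadratic [CommSemiring K] (a b d : K) :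
    dehomogenize (binaryQuadratic a b d) = .C a * .X ^ 2 + .C b * .X + .C d := by
  simp [binaryQuadratic, Polynomial.algebraMap_eq]

theorem coeff_dehomogenize_binaryQuartic [CommSemiring K] (c : Fin 5 → K) (k : Fin 5) :
    (dehomogenize (binaryQuartic c)).coeff k = c k := by
  fin_cases k <;>
    simp [binaryQuartic, Polynomial.algebraMap_eq, Polynomial.coeff_X, Polynomial.coeff_X_pow,
      Polynomial.coeff_C]

theorem natDegree_dehomogenize_binaryQuartic_le [CommSemiring K] (c : Fin 5 → K) :
    (dehomogenize (binaryQuartic c)).natDegree ≤ 4 := by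
  simp only [binaryQuartic, map_add, map_mul, algHom_C, Polynomial.algebraMap_eq, map_pow, aeval_X,
    Matrix.cons_val_zero, Matrix.cons_val_one, Matrix.cons_val_fin_one, mul_one, one_pow]
  compute_degree

theorem exists_eq_sqCoeffs_of_binaryQuartic_eq_sq [CommSemiring K] [NoZeroDivisors K] {c : Fin 5 → K}
    {q : MvPolynomial (Fin 2) K} (h : binaryQuartic c = q ^ 2) :
    ∃ a b d : K, c = sqCoeffs a b d := by
  have hg : (dehomogenize q).natDegree ≤ 2 := by
    have := natDegree_dehomogenize_binaryQuartic_le c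
    rw [h, map_pow, Polynomial.natDegree_pow] at this
    omega
  set g := dehomogenize q
  refine ⟨g.coeff 2, g.coeff 1, g.coeff 0, funext fun k => ?_⟩
  rw [← coeff_dehomogenize_binaryQuartic c k,
    ← coeff_dehomogenize_binaryQuartic (sqCoeffs _ _ _) k, h,
    ← binaryQuadratic_sq, map_pow, map_pow, dehomogenize_binaryQuadratic,
    ← Polynomial.eq_quadratic_of_natDegree_le_two hg]

theorem exists_eq_sqCoeffs_of_satisfiesCubics [Field K] [IsAlgClosed K] [NeZero (2 : K)]
    {c : Fin 5 → K} (h : SatisfiesCubics c) : ∃ a b d : K, c = sqCoeffs a b d := by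
  obtain ⟨h₁, h₂, -, -, -, h₆, h₇⟩ := h
  suffices ∃ a b d : K, c 0 = d ^ 2 ∧ c 1 = 2 * b * d ∧ c 2 = b ^ 2 + 2 * a * d ∧
      c 3 = 2 * a * b ∧ c 4 = a ^ 2 by
    obtain ⟨a, b, d, h0, h1, h2, h3, h4⟩ := this
    exact ⟨a, b, d, funext fun k => by fin_cases k <;> assumption⟩
  by_cases hc4 : c 4 = 0
  · have hc3 : c 3 = 0 := pow_eq_zero_iff three_ne_zero |>.mp <| by
      linear_combination h₁ + (4 * c 2 * c 3 - 8 * c 1 * c 4) * hc4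
    by_cases hc2 : c 2 = 0
    · have hc1 : c 1 = 0 := pow_eq_zero_iff three_ne_zero |>.mp <| by
        linear_combination h₇ - 8 * c 0 ^ 2 * hc3 + 4 * c 0 * c 1 * hc2
      obtain ⟨d, hd⟩ := IsAlgClosed.exists_pow_nat_eq (c 0) two_pos
      exact ⟨0, 0, d, hd.symm, by simp [hc1], by simp [hc2], by simp [hc3], by simp [hc4]⟩
    · obtain ⟨b, hb⟩ := IsAlgClosed.exists_pow_nat_eq (c 2) two_pos
      have hb0 : b ≠ 0 := by rintro rfl; exact hc2 (by simp [← hb])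
      have hdisc : c 1 ^ 2 = 4 * c 0 * c 2 := mul_left_cancel₀ hc2 <| by
        linear_combination h₆ - 16 * c 0 ^ 2 * hc4 - 2 * c 0 * c 1 * hc3
      refine ⟨0, b, c 1 / (2 * b), ?_, by field_simp, by simp [hb], by simp [hc3],
        by simp [hc4]⟩
      field_simp
      linear_combination 4 * c 0 * hb - hdisc
  · obtain ⟨a, ha⟩ := IsAlgClosed.exists_pow_nat_eq (c 4) two_pos
    have ha0 : a ≠ 0 := by rintro rfl; exact hc4 (by simp [← ha])
    refine ⟨a, c 3 / (2 * a), (c 2 - (c 3 / (2 * a)) ^ 2) / (2 * a), ?_, ?_, by field_simp; ring,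
      by field_simp, ha.symm⟩
    · field_simp
      linear_combination (64 * c 0 * (a ^ 4 + a ^ 2 * c 4 + c 4 ^ 2) - 16 * c 2 ^ 2 * (a ^ 2 + c 4)
        + 8 * c 2 * c 3 ^ 2) * ha + 4 * c 4 * h₂ - c 3 * h₁
    · field_simp
      linear_combination (8 * c 1 * (a ^ 2 + c 4) - 4 * c 2 * c 3) * ha + h₁

end BinaryForms

/-- Over an algebraically closed field `K` of characteristic 0,
the binary quartic `s(x,y) = c₄x⁴ + c₃x³y + c₂x²y² + c₁xy³ + c₀y⁴` is the
square of a binary quadratic form if and only if `(c₀,…,c₄)` satisfies the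
seven listed cubic equations. -/
theorem stmt2 {K : Type*} [Field K] [IsAlgClosed K] [CharZero K] (c : Fin 5 → K) :
    (∃ q : MvPolynomial (Fin 2) K, q.IsHomogeneous 2 ∧
        (C (c 4) * X 0 ^ 4 + C (c 3) * X 0 ^ 3 * X 1 + C (c 2) * X 0 ^ 2 * X 1 ^ 2 +
          C (c 1) * X 0 * X 1 ^ 3 + C (c 0) * X 1 ^ 4) = q ^ 2) ↔
      (8 * c 1 * c 4 ^ 2 - 4 * c 2 * c 3 * c 4 + c 3 ^ 3 = 0 ∧
       16 * c 0 * c 4 ^ 2 + 2 * c 1 * c 3 * c 4 - 4 * c 2 ^ 2 * c 4 + c 2 * c 3 ^ 2 = 0 ∧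
       8 * c 0 * c 3 * c 4 - 4 * c 1 * c 2 * c 4 + c 1 * c 3 ^ 2 = 0 ∧
       c 0 * c 3 ^ 2 - c 1 ^ 2 * c 4 = 0 ∧
       8 * c 0 * c 1 * c 4 - 4 * c 0 * c 2 * c 3 + c 1 ^ 2 * c 3 = 0 ∧
       16 * c 0 ^ 2 * c 4 + 2 * c 0 * c 1 * c 3 - 4 * c 0 * c 2 ^ 2 + c 1 ^ 2 * c 2 = 0 ∧
       8 * c 0 ^ 2 * c 3 - 4 * c 0 * c 1 * c 2 + c 1 ^ 3 = 0) := by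
  refine ⟨fun ⟨q, _, hq⟩ => ?_, fun h => ?_⟩
  · obtain ⟨a, b, d, rfl⟩ := exists_eq_sqCoeffs_of_binaryQuartic_eq_sq hq
    exact satisfiesCubics_sqCoeffs a b d
  · obtain ⟨a, b, d, rfl⟩ := exists_eq_sqCoeffs_of_satisfiesCubics h
    exact ⟨binaryQuadratic a b d, isHomogeneous_binaryQuadratic a b d,
      (binaryQuadratic_sq a b d).symm⟩
end

section
/- Let K = ℂ{{t}} with valuation val, and let (A, B) ∈ K^2 be a bitangent coefficient pair of a symmetric plane quartic (i.e., one invariant under permuting x, y, z) such that val(A) = val(B) = −a for some a ≥ 2, and suppose additionally that val(A + B) > −a. If every bitangent pair (A', B') of the curve satisfies val(A'/B' + 1/B' + 1) ≤ 0, then we reach a contradiction; hence val(A + B) = −a. -/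
/-!
Since `A/B + 1/B + 1 = (A + B + 1)/B` and `v B = -a`, the bound on the pair `(A/B, 1/B)`
says `v (A + B + 1) ≤ -a < 0 = v 1`. By the ultrametric inequality the constant `1` can then
not be what makes `A + B + 1` small, so `v (A + B) ≤ v (A + B + 1) ≤ -a`; the reverse
inequality `-a ≤ v (A + B)` is the ultrametric inequality for `A + B`.
-/

section RealValuation

variable {K : Type*} [Field K] {v : K → ℝ}

theorem val_one_of_map_mul (hmul : ∀ x y : K, x ≠ 0 → y ≠ 0 → v (x * y) = v x + v y) :
    v 1 = 0 := by
  have h := hmul 1 1 one_ne_zero one_ne_zero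
  rw [one_mul] at h
  linarith

theorem val_div_of_map_mul (hmul : ∀ x y : K, x ≠ 0 → y ≠ 0 → v (x * y) = v x + v y)
    {x y : K} (hx : x ≠ 0) (hy : y ≠ 0) : v (x / y) = v x - v y := by
  have hinv : v y⁻¹ = -v y := by
    have h := hmul y y⁻¹ hy (inv_ne_zero hy)
    rw [mul_inv_cancel₀ hy, val_one_of_map_mul hmul] at h
    linarith
  rw [div_eq_mul_inv, hmul x y⁻¹ hx (inv_ne_zero hy), hinv, sub_eq_add_neg]

theorem le_val_add_of_val_add_lt
    (hadd : ∀ x y : K, x ≠ 0 → y ≠ 0 → x + y ≠ 0 → min (v x) (v y) ≤ v (x + y))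
    {x y : K} (hx : x ≠ 0) (hy : y ≠ 0) (hxy : x + y ≠ 0) (h : v (x + y) < v y) :
    v x ≤ v (x + y) := by
  rcases min_le_iff.mp (hadd x y hx hy hxy) with hle | hle
  · exact hle
  · linarith

end RealValuation

/-- Let `K = ℂ{{t}}` (or any field) with a nonarchimedean
valuation `v`, and let `(A, B)` be a bitangent coefficient pair of a symmetric
plane quartic with `v A = v B = −a` for some `a ≥ 2`.  By symmetry, `(A/B, 1/B)`
is also a bitangent pair; assuming the bound `v (A/B + 1/B + 1) ≤ 0` satisfied
by all bitangent pairs, the assumption `v (A + B) > −a` (or `A + B = 0`) leads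
to a contradiction; hence `A + B ≠ 0` and `v (A + B) = −a`. -/
theorem stmt17 {K : Type*} [Field K] (v : K → ℝ)
    (hmul : ∀ x y : K, x ≠ 0 → y ≠ 0 → v (x * y) = v x + v y)
    (hadd : ∀ x y : K, x ≠ 0 → y ≠ 0 → x + y ≠ 0 → min (v x) (v y) ≤ v (x + y))
    (A B : K) (hA : A ≠ 0) (hB : B ≠ 0) (a : ℝ) (ha : 2 ≤ a)
    (hvA : v A = -a) (hvB : v B = -a)
    (hsym : A / B + 1 / B + 1 ≠ 0)
    (hbound : v (A / B + 1 / B + 1) ≤ 0) :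
    A + B ≠ 0 ∧ v (A + B) = -a := by
  have hswap : A / B + 1 / B + 1 = (A + B + 1) / B := by
    field_simp
    ring
  have hsum : A + B + 1 ≠ 0 := fun h => hsym (by rw [hswap, h, zero_div])
  have hsmall : v (A + B + 1) ≤ -a := by
    rw [hswap, val_div_of_map_mul hmul hsum hB, hvB] at hbound
    linarith
  have hv1 := val_one_of_map_mul hmul
  have hAB : A + B ≠ 0 := by
    intro h
    rw [h, zero_add, hv1] at hsmall
    linarith
  have hlower : -a ≤ v (A + B) := by
    simpa only [hvA, hvB, min_self] using hadd A B hA hB hAB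
  have hupper : v (A + B) ≤ v (A + B + 1) :=
    le_val_add_of_val_add_lt hadd hAB one_ne_zero hsum (by linarith)
  exact ⟨hAB, le_antisymm (hupper.trans hsmall) hlower⟩
end

section
/- Let T = conv{(1,1), (2,1), (1,2)} ⊂ ℝ². If P ⊆ conv{(0,0),(4,0),(0,4)} is a lattice polygon containing T that meets each of the three lines i = 0, j = 0, and i + j = 4, and contains at least one of the points (4,0),(3,1),(3,0), at least one of (0,4),(1,3),(0,3), and at least one of (0,0),(1,0),(0,1), then T lies in the interior of P, and the interior lattice points of P are exactly (1,1), (2,1), (1,2). -/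
/-!
The hypotheses are invariant under the lattice symmetry `(x, y) ↦ (4 - x - y, x)` of `Δ₄`,
which cycles the vertices of `Δ₄` and those of `T`, so it suffices to show that `(1, 1)` is an
interior point of `P`. From a point of `P` near the origin (and, when that point is `(1, 0)` or
`(0, 1)`, from the point of `P` on the opposite coordinate axis) together with `T`, one obtains
the four corners of the square `[7/8, 9/8]²` as convex combinations of points of `P`.
Conversely an interior point of `P` is interior to `Δ₄`, and the only lattice points there are
the vertices of `T`.
-/

open Set

theorem Convex.smul_add_smul_add_smul_mem {E : Type*} [AddCommGroup E] [Module ℝ E]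
    {s : Set E} (hs : Convex ℝ s) {x y z : E} (hx : x ∈ s) (hy : y ∈ s) (hz : z ∈ s)
    {a b c : ℝ} (ha : 0 ≤ a) (hb : 0 ≤ b) (hc : 0 ≤ c) (habc : a + b + c = 1) :
    a • x + b • y + c • z ∈ s := by
  have := hs.sum_mem (t := Finset.univ) (w := ![a, b, c]) (z := ![x, y, z])
    (by intro i _; fin_cases i <;> simpa) (by simpa [Fin.sum_univ_three] using habc)
    (by intro i _; fin_cases i <;> simpa)
  simpa [Fin.sum_univ_three] using this

theorem Convex.mk_mem_interior_of_corners {P : Set (ℝ × ℝ)} (hP : Convex ℝ P)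
    {a₁ b₁ a₂ b₂ x y : ℝ} (hx : x ∈ Ioo a₁ b₁) (hy : y ∈ Ioo a₂ b₂)
    (h : ({a₁, b₁} ×ˢ {a₂, b₂} : Set (ℝ × ℝ)) ⊆ P) : (x, y) ∈ interior P := by
  have hbox : Icc a₁ b₁ ×ˢ Icc a₂ b₂ ⊆ P := by
    rw [← segment_eq_Icc (hx.1.trans hx.2).le, ← segment_eq_Icc (hy.1.trans hy.2).le,
      ← convexHull_pair, ← convexHull_pair, ← convexHull_prod]
    exact convexHull_min h hP
  apply interior_mono hbox
  rw [interior_prod_eq, interior_Icc, interior_Icc]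
  exact ⟨hx, hy⟩

theorem pos_fst_of_mem_interior {Y : Type*} [TopologicalSpace Y] {P : Set (ℝ × Y)}
    (h : ∀ p ∈ P, 0 ≤ p.1) {z : ℝ × Y} (hz : z ∈ interior P) : 0 < z.1 := by
  have : Prod.fst '' interior P ⊆ interior (Ici 0) :=
    interior_maximal (by rintro _ ⟨p, hp, rfl⟩; exact h p (interior_subset hp))
      (isOpenMap_fst _ isOpen_interior)
  rw [interior_Ici] at this
  exact this ⟨z, hz, rfl⟩

def Δ₄ : Set (ℝ × ℝ) := {p | 0 ≤ p.1 ∧ 0 ≤ p.2 ∧ p.1 + p.2 ≤ 4}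

theorem convexHull_subset_Δ₄ :
    convexHull ℝ {((0 : ℝ), (0 : ℝ)), (4, 0), (0, 4)} ⊆ Δ₄ := by
  refine convexHull_min ?_ ?_
  · rintro _ (rfl | rfl | rfl) <;> norm_num [Δ₄]
  · intro x hx y hy a b ha hb hab
    obtain ⟨hx₁, hx₂, hx₃⟩ := hx
    obtain ⟨hy₁, hy₂, hy₃⟩ := hy
    refine ⟨?_, ?_, ?_⟩ <;>
      simp only [Prod.fst_add, Prod.snd_add, Prod.smul_fst, Prod.smul_snd, smul_eq_mul]
    · positivity
    · positivity
    nlinarith [mul_le_mul_of_nonneg_left hx₃ ha, mul_le_mul_of_nonneg_left hy₃ hb]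

@[simps]
def rotΔ : ℝ × ℝ ≃ₜ ℝ × ℝ where
  toFun p := (4 - p.1 - p.2, p.1)
  invFun p := (p.2, 4 - p.1 - p.2)
  left_inv p := by ext <;> simp; ring
  right_inv p := by ext <;> simp
  continuous_toFun := by fun_prop
  continuous_invFun := by fun_prop

/-- `Δ₄` is cut out by inequalities here so that the conditions transport along `rotΔ`. -/
structure Admissible (P : Set (ℝ × ℝ)) : Prop where
  convex : Convex ℝ P
  one_one_mem : ((1 : ℝ), (1 : ℝ)) ∈ P
  two_one_mem : ((2 : ℝ), (1 : ℝ)) ∈ P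
  one_two_mem : ((1 : ℝ), (2 : ℝ)) ∈ P
  subset_Δ₄ : P ⊆ Δ₄
  meets_fst_eq_zero : (P ∩ {p : ℝ × ℝ | p.1 = 0}).Nonempty
  meets_snd_eq_zero : (P ∩ {p : ℝ × ℝ | p.2 = 0}).Nonempty
  meets_add_eq_four : (P ∩ {p : ℝ × ℝ | p.1 + p.2 = 4}).Nonempty
  near_four_zero : ((4 : ℝ), (0 : ℝ)) ∈ P ∨ ((3 : ℝ), (1 : ℝ)) ∈ P ∨ ((3 : ℝ), (0 : ℝ)) ∈ P
  near_zero_four : ((0 : ℝ), (4 : ℝ)) ∈ P ∨ ((1 : ℝ), (3 : ℝ)) ∈ P ∨ ((0 : ℝ), (3 : ℝ)) ∈ P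
  near_zero_zero : ((0 : ℝ), (0 : ℝ)) ∈ P ∨ ((1 : ℝ), (0 : ℝ)) ∈ P ∨ ((0 : ℝ), (1 : ℝ)) ∈ P

namespace Admissible

variable {P : Set (ℝ × ℝ)}

theorem one_one_mem_interior (h : Admissible P) : ((1 : ℝ), (1 : ℝ)) ∈ interior P := by
  have combo {p q r : ℝ × ℝ} (hp : p ∈ P) (hq : q ∈ P) (hr : r ∈ P) (a b c : ℝ)
      (ha : 0 ≤ a) (hb : 0 ≤ b) (hc : 0 ≤ c) (habc : a + b + c = 1) {w : ℝ × ℝ}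
      (hw : w = a • p + b • q + c • r) : w ∈ P :=
    hw ▸ h.convex.smul_add_smul_add_smul_mem hp hq hr ha hb hc habc
  obtain ⟨⟨_, s⟩, hA, rfl : _ = (0 : ℝ)⟩ := h.meets_fst_eq_zero
  obtain ⟨⟨t, _⟩, hB, rfl : _ = (0 : ℝ)⟩ := h.meets_snd_eq_zero
  obtain ⟨-, hs₀, hs₄⟩ := h.subset_Δ₄ hA
  obtain ⟨ht₀, -, ht₄⟩ := h.subset_Δ₄ hB
  have h₁₁ := h.one_one_mem
  have h₂₁ := h.two_one_mem
  have h₁₂ := h.one_two_mem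
  refine h.convex.mk_mem_interior_of_corners (a₁ := 7 / 8) (b₁ := 9 / 8) (a₂ := 7 / 8)
    (b₂ := 9 / 8) (by norm_num) (by norm_num) ?_
  suffices ((7 / 8 : ℝ), (7 / 8 : ℝ)) ∈ P ∧ ((9 / 8 : ℝ), (7 / 8 : ℝ)) ∈ P ∧
      ((7 / 8 : ℝ), (9 / 8 : ℝ)) ∈ P by
    rintro ⟨x, y⟩ ⟨rfl | rfl, rfl | rfl⟩
    exacts [this.1, this.2.2, this.2.1,
      combo h₁₁ h₂₁ h₁₂ (3 / 4) (1 / 8) (1 / 8) (by norm_num) (by norm_num) (by norm_num)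
        (by norm_num) (by ext <;> norm_num)]
  -- weights affine in `s, t ∈ [0, 4]` avoid splitting on where `P` meets the axes
  rcases h.near_zero_zero with hO | hX | hY <;> [
    refine ⟨combo hO h₁₁ h₁₁ (1 / 8) (7 / 8) 0 ?_ ?_ ?_ ?_ ?_,
      combo hO h₁₁ h₂₁ (1 / 8) (5 / 8) (1 / 4) ?_ ?_ ?_ ?_ ?_,
      combo hO h₁₁ h₁₂ (1 / 8) (5 / 8) (1 / 4) ?_ ?_ ?_ ?_ ?_⟩;
    refine ⟨combo hX hA h₁₁ (s / 8) (1 / 8) ((7 - s) / 8) ?_ ?_ ?_ ?_ ?_,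
      combo hX h₁₁ h₂₁ (1 / 8) (3 / 4) (1 / 8) ?_ ?_ ?_ ?_ ?_,
      combo hX hA h₁₂ ((5 + s) / 16) (1 / 8) ((9 - s) / 16) ?_ ?_ ?_ ?_ ?_⟩;
    refine ⟨combo hY hB h₁₁ (t / 8) (1 / 8) ((7 - t) / 8) ?_ ?_ ?_ ?_ ?_,
      combo hY hB h₂₁ ((5 + t) / 16) (1 / 8) ((9 - t) / 16) ?_ ?_ ?_ ?_ ?_,
      combo hY h₁₁ h₁₂ (1 / 8) (3 / 4) (1 / 8) ?_ ?_ ?_ ?_ ?_⟩]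
  all_goals first | linarith | ext <;> simp <;> linarith

theorem preimage_rotΔ (h : Admissible P) : Admissible (rotΔ ⁻¹' P) where
  convex x hx y hy a b ha hb hab := by
    show rotΔ (a • x + b • y) ∈ P
    convert h.convex hx hy ha hb hab using 1
    ext <;> simp; linear_combination -4 * hab
  one_one_mem := by norm_num [h.two_one_mem]
  two_one_mem := by norm_num [h.one_two_mem]
  one_two_mem := by norm_num [h.one_one_mem]
  subset_Δ₄ p hp := by
    obtain ⟨h₁, h₂, h₃⟩ := h.subset_Δ₄ hp
    simp only [Δ₄, rotΔ_apply] at h₁ h₂ h₃ ⊢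
    exact ⟨h₂, by linarith, by linarith⟩
  meets_fst_eq_zero := by
    obtain ⟨q, hq, hq₂ : q.2 = 0⟩ := h.meets_snd_eq_zero
    exact ⟨rotΔ.symm q, by simpa using hq, by simpa using hq₂⟩
  meets_snd_eq_zero := by
    obtain ⟨q, hq, hq₁₂ : q.1 + q.2 = 4⟩ := h.meets_add_eq_four
    exact ⟨rotΔ.symm q, by simpa using hq, by simp; linarith⟩
  meets_add_eq_four := by
    obtain ⟨q, hq, hq₁ : q.1 = 0⟩ := h.meets_fst_eq_zero
    exact ⟨rotΔ.symm q, by simpa using hq, by simp [hq₁]⟩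
  near_four_zero := by have := h.near_zero_four; norm_num; tauto
  near_zero_four := by have := h.near_zero_zero; norm_num; tauto
  near_zero_zero := by have := h.near_four_zero; norm_num; tauto

theorem vertices_mem_interior (h : Admissible P) :
    ((1 : ℝ), (1 : ℝ)) ∈ interior P ∧ ((2 : ℝ), (1 : ℝ)) ∈ interior P ∧
      ((1 : ℝ), (2 : ℝ)) ∈ interior P := by
  have h₁ := h.preimage_rotΔ.one_one_mem_interior
  have h₂ := h.preimage_rotΔ.preimage_rotΔ.one_one_mem_interior
  simp only [← rotΔ.preimage_interior, mem_preimage] at h₁ h₂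
  norm_num at h₁ h₂
  exact ⟨h.one_one_mem_interior, h₁, h₂⟩

theorem bounds_of_mem_interior (h : Admissible P) {z : ℝ × ℝ} (hz : z ∈ interior P) :
    0 < z.1 ∧ 0 < z.2 ∧ z.1 + z.2 < 4 := by
  have pos_fst {Q : Set (ℝ × ℝ)} (hQ : Admissible Q) {w : ℝ × ℝ} (hw : w ∈ interior Q) :
      0 < w.1 :=
    pos_fst_of_mem_interior (fun p hp => (hQ.subset_Δ₄ hp).1) hw
  have h₁ : rotΔ.symm z ∈ interior (rotΔ ⁻¹' P) := by
    rwa [← rotΔ.preimage_interior, mem_preimage, rotΔ.apply_symm_apply]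
  have h₂ : rotΔ.symm (rotΔ.symm z) ∈ interior (rotΔ ⁻¹' (rotΔ ⁻¹' P)) := by
    rwa [← rotΔ.preimage_interior, mem_preimage, rotΔ.apply_symm_apply]
  have := pos_fst h.preimage_rotΔ h₁
  have := pos_fst h.preimage_rotΔ.preimage_rotΔ h₂
  simp only [rotΔ_symm_apply] at *
  exact ⟨pos_fst h hz, by linarith, by linarith⟩

end Admissible

/-- Let `T = conv{(1,1), (2,1), (1,2)} ⊂ ℝ²`.  If
`P ⊆ conv{(0,0),(4,0),(0,4)}` is a lattice polygon containing `T` that meets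
each of the three lines `i = 0`, `j = 0` and `i + j = 4`, and contains at least
one of the points `(4,0),(3,1),(3,0)`, at least one of `(0,4),(1,3),(0,3)`, and
at least one of `(0,0),(1,0),(0,1)`, then `T` lies in the interior of `P`, and
the interior lattice points of `P` are exactly `(1,1)`, `(2,1)`, `(1,2)`. -/
theorem stmt18 (F : Finset (ℤ × ℤ)) (P : Set (ℝ × ℝ))
    (hP : P = convexHull ℝ ((fun p : ℤ × ℤ => ((p.1 : ℝ), (p.2 : ℝ))) '' ↑F))
    (hPΔ : P ⊆ convexHull ℝ {((0 : ℝ), (0 : ℝ)), (4, 0), (0, 4)})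
    (hT : convexHull ℝ {((1 : ℝ), (1 : ℝ)), (2, 1), (1, 2)} ⊆ P)
    (hlx : (P ∩ {p : ℝ × ℝ | p.1 = 0}).Nonempty)
    (hly : (P ∩ {p : ℝ × ℝ | p.2 = 0}).Nonempty)
    (hlxy : (P ∩ {p : ℝ × ℝ | p.1 + p.2 = 4}).Nonempty)
    (h1 : ((4 : ℝ), (0 : ℝ)) ∈ P ∨ ((3 : ℝ), (1 : ℝ)) ∈ P ∨ ((3 : ℝ), (0 : ℝ)) ∈ P)
    (h2 : ((0 : ℝ), (4 : ℝ)) ∈ P ∨ ((1 : ℝ), (3 : ℝ)) ∈ P ∨ ((0 : ℝ), (3 : ℝ)) ∈ P)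
    (h3 : ((0 : ℝ), (0 : ℝ)) ∈ P ∨ ((1 : ℝ), (0 : ℝ)) ∈ P ∨ ((0 : ℝ), (1 : ℝ)) ∈ P) :
    convexHull ℝ {((1 : ℝ), (1 : ℝ)), (2, 1), (1, 2)} ⊆ interior P ∧
      ∀ q : ℤ × ℤ, ((q.1 : ℝ), (q.2 : ℝ)) ∈ interior P ↔
        q = (1, 1) ∨ q = (2, 1) ∨ q = (1, 2) := by
  have vertex_mem {v : ℝ × ℝ} (hv : v ∈ ({(1, 1), (2, 1), (1, 2)} : Set (ℝ × ℝ))) : v ∈ P :=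
    hT (subset_convexHull ℝ _ hv)
  have hA : Admissible P :=
    ⟨hP ▸ convex_convexHull ℝ _, vertex_mem (by simp), vertex_mem (by simp),
      vertex_mem (by simp), hPΔ.trans convexHull_subset_Δ₄, hlx, hly, hlxy, h1, h2, h3⟩
  obtain ⟨h₁₁, h₂₁, h₁₂⟩ := hA.vertices_mem_interior
  refine ⟨convexHull_min ?_ hA.convex.interior, ?_⟩
  · rintro _ (rfl | rfl | rfl) <;> assumption
  intro q
  refine ⟨fun hq => ?_, by rintro (rfl | rfl | rfl) <;> simpa⟩
  obtain ⟨hq₁, hq₂, hq₁₂⟩ := hA.bounds_of_mem_interior hq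
  dsimp only at hq₁ hq₂ hq₁₂
  have : q.1 + q.2 < 4 := by exact_mod_cast hq₁₂
  have : 0 < q.1 := by exact_mod_cast hq₁
  have : 0 < q.2 := by exact_mod_cast hq₂
  simp only [Prod.ext_iff]
  omega
end
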